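/- Let ι be a nonempty index set and q, b : ι → ℝ families of real numbers with q i ≥ 0 and b i ≥ 0 for all i, and assume the relative bound: for every ε > 0 there exists C ≥ 0 such that b i ≤ ε · q i + C for all i. Then for every β ≥ 0 the family (q i − β · b i) is bounded below, and the function F(β) = ⨅ i, (q i − β · b i) is continuous on [0, ∞). -/
import Mathlib


/-- Abstract version of Proposition 2.6(ii): under the relative bound
`b i ≤ ε * q i + C(ε)`, the infima `F(β) = ⨅ i, (q i − β * b i)` are real
numbers (bounded below families) and `F` is continuous on `[0, ∞)`. -/
theorem stmt_2 {ι : Type*} [Nonempty ι] (q b : ι → ℝ)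
    (hq : ∀ i, 0 ≤ q i) (hb : ∀ i, 0 ≤ b i)
    (hrel : ∀ ε : ℝ, 0 < ε → ∃ C : ℝ, 0 ≤ C ∧ ∀ i, b i ≤ ε * q i + C) :
    (∀ β : ℝ, 0 ≤ β → BddBelow (Set.range fun i => q i - β * b i)) ∧
    ContinuousOn (fun β : ℝ => ⨅ i, (q i - β * b i)) (Set.Ici 0) := by
  -- common local estimates around any β₀ ≥ 0
  have hBdd : ∀ β : ℝ, 0 ≤ β → BddBelow (Set.range fun i => q i - β * b i) := by
    intro β hβ
    have hε : (0:ℝ) < (β + 1)⁻¹ := by positivity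
    obtain ⟨C, hC0, hC⟩ := hrel _ hε
    refine ⟨-(β * C), ?_⟩
    rintro _ ⟨i, rfl⟩
    have h1 : β * (β + 1)⁻¹ ≤ 1 := by
      calc β * (β + 1)⁻¹ ≤ (β + 1) * (β + 1)⁻¹ :=
            mul_le_mul_of_nonneg_right (by linarith) (le_of_lt hε)
      _ = 1 := mul_inv_cancel₀ (by positivity)
    have h2 : b i ≤ (β + 1)⁻¹ * q i + C := hC i
    have h3 : 0 ≤ q i * (1 - β * (β + 1)⁻¹) :=
      mul_nonneg (hq i) (by linarith)
    have h4 : β * b i ≤ β * ((β + 1)⁻¹ * q i + C) :=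
      mul_le_mul_of_nonneg_left h2 hβ
    show -(β * C) ≤ q i - β * b i
    nlinarith
  refine ⟨hBdd, ?_⟩
  set F : ℝ → ℝ := fun β => ⨅ i, (q i - β * b i) with hF
  intro β₀ hβ₀
  have hβ₀' : (0:ℝ) ≤ β₀ := hβ₀
  -- work on the interval Icc 0 (β₀ + 1)
  have hpos : (0:ℝ) < 2 * (β₀ + 1) := by linarith
  have hε : (0:ℝ) < (2 * (β₀ + 1))⁻¹ := inv_pos.mpr hpos
  set ε : ℝ := (2 * (β₀ + 1))⁻¹ with hεdef
  obtain ⟨C, hC0, hC⟩ := hrel ε hε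
  have hcancel : (2 * (β₀ + 1)) * ε = 1 := mul_inv_cancel₀ (ne_of_gt hpos)
  set s : Set ℝ := Set.Icc 0 (β₀ + 1) with hs
  have hεsmall : ∀ β ∈ s, β * ε ≤ 1/2 := by
    intro β hβ
    have hβle : β ≤ β₀ + 1 := hβ.2
    have : (β₀ + 1) * ε = 1/2 := by linear_combination hcancel / 2
    calc β * ε ≤ (β₀ + 1) * ε := mul_le_mul_of_nonneg_right hβle (le_of_lt hε)
    _ = 1/2 := this
  -- upper bound for F on s
  set i₀ : ι := Classical.arbitrary ι with hi₀
  have hFub : ∀ β ∈ s, F β ≤ q i₀ := by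
    intro β hβ
    calc F β ≤ q i₀ - β * b i₀ := ciInf_le (hBdd β hβ.1) i₀
    _ ≤ q i₀ := by nlinarith [mul_nonneg hβ.1 (hb i₀)]
  -- Lipschitz constant
  set Q : ℝ := 2 * (q i₀ + 1 + (β₀ + 1) * C) with hQ
  have hQ0 : 0 ≤ Q := by
    have := hq i₀
    nlinarith [mul_nonneg (by linarith : (0:ℝ) ≤ β₀ + 1) hC0, hβ₀']
  set L : ℝ := ε * Q + C with hL
  have hL0 : 0 ≤ L := add_nonneg (mul_nonneg (le_of_lt hε) hQ0) hC0
  -- one-sided Lipschitz estimate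
  have hlip : ∀ β ∈ s, ∀ β' ∈ s, F β' ≤ F β + L * |β' - β| := by
    intro β hβ β' hβ'
    apply le_of_forall_pos_le_add
    intro δ hδ
    set δ' : ℝ := min δ 1 with hδ'
    have hδ'0 : 0 < δ' := lt_min hδ one_pos
    have hδ'1 : δ' ≤ 1 := min_le_right _ _
    have : F β < F β + δ' := by linarith
    obtain ⟨i, hi⟩ := exists_lt_of_ciInf_lt this
    -- near-minimizer bound on q i
    have hqbd : q i ≤ Q := by
      have h1 : b i ≤ ε * q i + C := hC i
      have h2 : β * b i ≤ β * (ε * q i + C) :=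
        mul_le_mul_of_nonneg_left h1 hβ.1
      have h3 : β * ε ≤ 1/2 := hεsmall β hβ
      have h4 : β * C ≤ (β₀ + 1) * C := mul_le_mul_of_nonneg_right hβ.2 hC0
      have h5 : F β ≤ q i₀ := hFub β hβ
      have h6 : q i * (1/2 - β * ε) ≥ 0 := by
        apply mul_nonneg (hq i); linarith
      nlinarith
    have hbbd : b i ≤ L := by
      have h1 : b i ≤ ε * q i + C := hC i
      have h2 : ε * q i ≤ ε * Q := mul_le_mul_of_nonneg_left hqbd (le_of_lt hε)
      rw [hL]; linarith
    have key : F β' ≤ q i - β' * b i := ciInf_le (hBdd β' hβ'.1) i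
    have h7 : (β - β') * b i ≤ |β' - β| * L := by
      calc (β - β') * b i ≤ |β - β'| * b i :=
            mul_le_mul_of_nonneg_right (le_abs_self _) (hb i)
      _ = |β' - β| * b i := by rw [abs_sub_comm]
      _ ≤ |β' - β| * L := mul_le_mul_of_nonneg_left hbbd (abs_nonneg _)
    have hδ'le : δ' ≤ δ := min_le_left _ _
    have : q i - β' * b i = (q i - β * b i) + (β - β') * b i := by ring
    nlinarith
  -- conclude Lipschitz on s, hence continuity
  have hlipOn : LipschitzOnWith (Real.toNNReal L) F s := by
    rw [lipschitzOnWith_iff_dist_le_mul]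
    intro x hx y hy
    rw [Real.dist_eq, Real.dist_eq]
    have h1 := hlip y hy x hx
    have h2 := hlip x hx y hy
    have hcoe : (Real.toNNReal L : ℝ) = L := Real.coe_toNNReal L hL0
    have habs : L * |x - y| = L * |y - x| := by rw [abs_sub_comm x y]
    rw [hcoe, abs_sub_le_iff]
    constructor
    · linarith [h1, habs]
    · linarith [h2, habs]
  have hcont : ContinuousOn F s := hlipOn.continuousOn
  have hmem : s ∈ nhdsWithin β₀ (Set.Ici 0) := by
    rw [hs]
    have : Set.Icc (0:ℝ) (β₀ + 1) = Set.Ici 0 ∩ Set.Iic (β₀ + 1) := by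
      ext x; simp [Set.mem_Icc, Set.mem_Ici, Set.mem_Iic, and_comm]
    rw [this]
    exact Filter.inter_mem self_mem_nhdsWithin
      (mem_nhdsWithin_of_mem_nhds (Iic_mem_nhds (by linarith)))
  have hβ₀s : β₀ ∈ s := ⟨hβ₀, by linarith⟩
  exact (hcont β₀ hβ₀s).mono_of_mem_nhdsWithin hmem
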